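/- Let I = P_1 ∩ P_2 ∩ P_3 ∩ P_4, where P_1, P_2, P_3, P_4 are monomial prime ideals of S = K[x_1,…,x_n] with G(P_i) ∩ G(P_j) = ∅ for all i ≠ j, heights d_i = height(P_i) satisfying d_1 ≥ d_2 ≥ d_3 ≥ d_4 = d and d_1 + d_2 + d_3 + d_4 = n, and P_i = (x_{r_{i−1}+1},…,x_{r_i}) where r_0 = 0 and r_i = d_1 + … + d_i. Then sdepth_S(I) ≤ 3 + d + (1/(d_1 d_2 d_3)) · [ C(n−d,4) − Σ_{i=1}^3 C(d_i,4) − Σ_{i=1}^3 C(d_i,3)((n−d) − d_i) − Σ_{1 ≤ i < j ≤ 3} C(d_i,2)C(d_j,2) ]. -/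

import Mathlib

open MvPolynomial

/-- The Stanley space `u·K[Z]` inside the polynomial ring `K[x_i : i ∈ σ]`:
the `K`-span of all monomials `x^(u+v)` with `supp v ⊆ Z`. -/
noncomputable def stanleySpace (K : Type*) [Field K] {σ : Type*} (u : σ →₀ ℕ) (Z : Set σ) :
    Submodule K (MvPolynomial σ K) :=
  Submodule.span K
    ((fun v : σ →₀ ℕ => (monomial (u + v) (1 : K) : MvPolynomial σ K)) ''
      {v | (v.support : Set σ) ⊆ Z})

/-- `(u, Z)` (indexed by a finite type `ι`) is a Stanley decomposition of the monomial
ideal `I`: the Stanley spaces `x^(u i)·K[Z i]` are independent and their (direct) sum is `I`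
as a `K`-vector space.  (Inside the polynomial ring each Stanley space is automatically a
free `K[Z]`-module.) -/
def IsStanleyDecompOfIdeal {K σ : Type*} [Field K] {ι : Type} [Fintype ι]
    (I : Ideal (MvPolynomial σ K)) (u : ι → (σ →₀ ℕ)) (Z : ι → Finset σ) : Prop :=
  iSupIndep (fun i => stanleySpace K (u i) (Z i)) ∧
    (⨆ i, stanleySpace K (u i) (Z i)) = Submodule.restrictScalars K I

/-- The Stanley depth of a monomial ideal `I`: the largest `d` such that there is a Stanley
decomposition of `I` all of whose Stanley spaces `u_i K[Z_i]` satisfy `|Z_i| ≥ d`. -/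
noncomputable def sdepthIdeal {K σ : Type*} [Field K] (I : Ideal (MvPolynomial σ K)) : ℕ :=
  sSup {d | ∃ (ι : Type) (_ : Fintype ι) (_ : Nonempty ι) (u : ι → (σ →₀ ℕ))
    (Z : ι → Finset σ), IsStanleyDecompOfIdeal I u Z ∧ ∀ i, d ≤ (Z i).card}

/-- `(u, Z)` is a Stanley decomposition of `S/I`:  each Stanley space `x^(u i)·K[Z i]` meets
`I` trivially (equivalently, its image in `S/I` is a free `K[Z i]`-module), the images of the
Stanley spaces in `S/I` are independent, and they sum to `S/I`. -/
def IsStanleyDecompOfQuotient {K σ : Type*} [Field K] {ι : Type} [Fintype ι]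
    (I : Ideal (MvPolynomial σ K)) (u : ι → (σ →₀ ℕ)) (Z : ι → Finset σ) : Prop :=
  (∀ i, Disjoint (stanleySpace K (u i) (Z i)) (Submodule.restrictScalars K I)) ∧
    iSupIndep (fun i =>
      (stanleySpace K (u i) (Z i)).map (Ideal.Quotient.mkₐ K I).toLinearMap) ∧
    (⨆ i, (stanleySpace K (u i) (Z i)).map (Ideal.Quotient.mkₐ K I).toLinearMap) = ⊤

/-- The Stanley depth of `S/I` for a monomial ideal `I`. -/
noncomputable def sdepthQuot {K σ : Type*} [Field K] (I : Ideal (MvPolynomial σ K)) : ℕ :=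
  sSup {d | ∃ (ι : Type) (_ : Fintype ι) (_ : Nonempty ι) (u : ι → (σ →₀ ℕ))
    (Z : ι → Finset σ), IsStanleyDecompOfQuotient I u Z ∧ ∀ i, d ≤ (Z i).card}

/-- A monomial ideal: an ideal generated by monomials. -/
def IsMonomialIdeal {K σ : Type*} [Field K] (I : Ideal (MvPolynomial σ K)) : Prop :=
  ∃ A : Set (σ →₀ ℕ), I = Ideal.span ((fun a => (monomial a (1 : K) : MvPolynomial σ K)) '' A)

/-- The (exponents of the) minimal monomial generators of a monomial ideal `I`:
monomials in `I` that are not proper multiples of monomials in `I`. -/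
def minimalGenerators {K σ : Type*} [Field K] (I : Ideal (MvPolynomial σ K)) :
    Set (σ →₀ ℕ) :=
  {a | (monomial a (1 : K) : MvPolynomial σ K) ∈ I ∧
    ∀ b < a, (monomial b (1 : K) : MvPolynomial σ K) ∉ I}

/-- The depth (w.r.t. the maximal graded ideal `m = (x_1,…,x_n)`) of a module `M` over the
polynomial ring: the maximal length of a regular sequence on `M` consisting of elements
of `m`. -/
noncomputable def mdepth (K σ : Type*) [Field K] (M : Type*) [AddCommGroup M]
    [Module (MvPolynomial σ K) M] : ℕ :=
  sSup {k | ∃ rs : List (MvPolynomial σ K), rs.length = k ∧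
    (∀ r ∈ rs, r ∈ Ideal.span (Set.range (X : σ → MvPolynomial σ K))) ∧
    RingTheory.Sequence.IsRegular M rs}

/-- The height of a prime ideal: the height of the corresponding point
of the prime spectrum, i.e. the supremum of lengths of chains of primes below it. -/
noncomputable def primeHt {R : Type*} [CommRing R] (P : Ideal R) (hP : P.IsPrime) : ℕ∞ :=
  Order.height (⟨P, hP⟩ : PrimeSpectrum R)

section Aux
variable {K : Type*} [Field K] {σ : Type*}

lemma coeff_eq_zero_of_mem_span_monomials {A : Set (σ →₀ ℕ)} {p : MvPolynomial σ K}
    (hp : p ∈ Submodule.span K ((fun a => (monomial a (1 : K) : MvPolynomial σ K)) '' A))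
    {w : σ →₀ ℕ} (hw : w ∉ A) : coeff w p = 0 := by
  induction hp using Submodule.span_induction with
  | mem x hx =>
    obtain ⟨a, ha, rfl⟩ := hx
    classical
    rw [coeff_monomial]
    rcases eq_or_ne w a with rfl | h
    · exact absurd ha hw
    · simp [Ne.symm h]
  | zero => simp
  | add x y _ _ hx hy => simp [coeff_add, hx, hy]
  | smul c x _ hx => simp [coeff_smul, hx]

lemma mem_span_monomials_iff {A : Set (σ →₀ ℕ)} {w : σ →₀ ℕ} :
    (monomial w (1 : K) : MvPolynomial σ K) ∈
      Submodule.span K ((fun a => (monomial a (1 : K) : MvPolynomial σ K)) '' A) ↔ w ∈ A := by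
  constructor
  · intro h
    by_contra hw
    have := coeff_eq_zero_of_mem_span_monomials h hw
    classical
    rw [coeff_monomial, if_pos rfl] at this
    exact one_ne_zero this
  · intro h
    exact Submodule.subset_span ⟨w, h, rfl⟩

lemma stanleySpace_eq_span (u : σ →₀ ℕ) (Z : Set σ) :
    stanleySpace K u Z = Submodule.span K
      ((fun a => (monomial a (1 : K) : MvPolynomial σ K)) ''
        ((fun v => u + v) '' {v : σ →₀ ℕ | (v.support : Set σ) ⊆ Z})) := by
  rw [stanleySpace, Set.image_image]

lemma monomial_mem_stanleySpace_iff {u : σ →₀ ℕ} {Z : Set σ} {w : σ →₀ ℕ} :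
    (monomial w (1 : K) : MvPolynomial σ K) ∈ stanleySpace K u Z ↔
      ∃ v : σ →₀ ℕ, (v.support : Set σ) ⊆ Z ∧ w = u + v := by
  rw [stanleySpace_eq_span, mem_span_monomials_iff]
  constructor
  · rintro ⟨v, hv, rfl⟩; exact ⟨v, hv, rfl⟩
  · rintro ⟨v, hv, rfl⟩; exact ⟨v, hv, rfl⟩

lemma monomial_mem_iSup_stanleySpace {ι : Type} {u : ι → (σ →₀ ℕ)} {Z : ι → Finset σ}
    {w : σ →₀ ℕ}
    (h : (monomial w (1 : K) : MvPolynomial σ K) ∈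
      ⨆ i, stanleySpace K (u i) ((Z i : Set σ))) :
    ∃ i, (monomial w (1 : K) : MvPolynomial σ K) ∈ stanleySpace K (u i) ((Z i : Set σ)) := by
  have hrw : (⨆ i, stanleySpace K (u i) ((Z i : Set σ))) =
      Submodule.span K ((fun a => (monomial a (1 : K) : MvPolynomial σ K)) ''
        (⋃ i, (fun v => u i + v) '' {v : σ →₀ ℕ | (v.support : Set σ) ⊆ (Z i : Set σ)})) := by
    rw [Set.image_iUnion, Submodule.span_iUnion]
    exact iSup_congr fun i => stanleySpace_eq_span (u i) (Z i)
  rw [hrw, mem_span_monomials_iff] at h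
  obtain ⟨i, hws⟩ := Set.mem_iUnion.mp h
  exact ⟨i, by rw [stanleySpace_eq_span, mem_span_monomials_iff]; exact hws⟩

lemma monomial_not_mem_two {ι : Type} {f : ι → Submodule K (MvPolynomial σ K)}
    (hind : iSupIndep f) {i j : ι} (hij : i ≠ j) {w : σ →₀ ℕ}
    (hi : (monomial w (1 : K) : MvPolynomial σ K) ∈ f i)
    (hj : (monomial w (1 : K) : MvPolynomial σ K) ∈ f j) : False := by
  have h2 : (monomial w (1 : K) : MvPolynomial σ K) ∈ ⨆ k, ⨆ _ : k ≠ i, f k :=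
    Submodule.mem_iSup_of_mem j (Submodule.mem_iSup_of_mem (Ne.symm hij) hj)
  have h0 := Submodule.disjoint_def.mp (hind i) _ hi h2
  exact (one_ne_zero : (1:K) ≠ 0) (MvPolynomial.monomial_eq_zero.mp h0)
end Aux
namespace SD4
open Finsupp

abbrev Q4 (n : ℕ) := Fin n × Fin n × Fin n × Fin n

variable {n : ℕ} (d₁ d₂ d₃ : ℕ)

noncomputable def gen (q : Q4 n) : Fin n →₀ ℕ :=
  Finsupp.single q.1 1 + Finsupp.single q.2.1 1 + Finsupp.single q.2.2.1 1 +
    Finsupp.single q.2.2.2 1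

/-- `q` has its coordinates in the four blocks. -/
def InJ (q : Q4 n) : Prop :=
  q.1.val < d₁ ∧ (d₁ ≤ q.2.1.val ∧ q.2.1.val < d₁ + d₂) ∧
    (d₁ + d₂ ≤ q.2.2.1.val ∧ q.2.2.1.val < d₁ + d₂ + d₃) ∧ d₁ + d₂ + d₃ ≤ q.2.2.2.val

instance (q : Q4 n) : Decidable (InJ d₁ d₂ d₃ q) := by unfold InJ; infer_instance

/-- the coordinate of `q` lying in the block of `j` -/
def cofn (q : Q4 n) (j : Fin n) : Fin n :=
  if j.val < d₁ then q.1 else if j.val < d₁ + d₂ then q.2.1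
    else if j.val < d₁ + d₂ + d₃ then q.2.2.1 else q.2.2.2

/-- replace the coordinate of `q` in the block of `j` by `j` -/
def repl (q : Q4 n) (j : Fin n) : Q4 n :=
  if j.val < d₁ then (j, q.2.1, q.2.2.1, q.2.2.2)
    else if j.val < d₁ + d₂ then (q.1, j, q.2.2.1, q.2.2.2)
    else if j.val < d₁ + d₂ + d₃ then (q.1, q.2.1, j, q.2.2.2)
    else (q.1, q.2.1, q.2.2.1, j)

def supp4 (q : Q4 n) : Finset (Fin n) := {q.1, q.2.1, q.2.2.1, q.2.2.2}

lemma mem_supp4_iff {q : Q4 n} {x : Fin n} :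
    x ∈ supp4 q ↔ x = q.1 ∨ x = q.2.1 ∨ x = q.2.2.1 ∨ x = q.2.2.2 := by
  simp [supp4]

lemma gen_apply (q : Q4 n) (x : Fin n) :
    gen q x = (if q.1 = x then 1 else 0) + (if q.2.1 = x then 1 else 0) +
      (if q.2.2.1 = x then 1 else 0) + (if q.2.2.2 = x then 1 else 0) := by
  simp [gen, Finsupp.add_apply, Finsupp.single_apply]

lemma gen_invariance (q : Q4 n) (j : Fin n) :
    gen (repl d₁ d₂ d₃ q j) + Finsupp.single (cofn d₁ d₂ d₃ q j) 1 =
      gen q + Finsupp.single j 1 := by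
  unfold repl cofn
  split_ifs <;> simp only [gen] <;> abel

lemma InJ_repl {q : Q4 n} (hq : InJ d₁ d₂ d₃ q) (j : Fin n) :
    InJ d₁ d₂ d₃ (repl d₁ d₂ d₃ q j) := by
  unfold InJ repl at *
  split_ifs <;> simp only at * <;> omega

lemma repl_repl {q : Q4 n} (hq : InJ d₁ d₂ d₃ q) (j : Fin n) :
    repl d₁ d₂ d₃ (repl d₁ d₂ d₃ q j) (cofn d₁ d₂ d₃ q j) = q := by
  obtain ⟨h1, h2, h3, h4⟩ := hq
  unfold repl cofn
  split_ifs <;> simp only at * <;>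
    first
      | (ext <;> simp <;> omega)
      | omega

lemma cofn_repl {q : Q4 n} (hq : InJ d₁ d₂ d₃ q) (j : Fin n) :
    cofn d₁ d₂ d₃ (repl d₁ d₂ d₃ q j) (cofn d₁ d₂ d₃ q j) = j := by
  obtain ⟨h1, h2, h3, h4⟩ := hq
  unfold repl cofn
  split_ifs <;> simp only at * <;> first | rfl | omega

end SD4
namespace SD4
variable {n : ℕ} {d₁ d₂ d₃ : ℕ}

lemma gen_le_one {q : Q4 n} (hq : InJ d₁ d₂ d₃ q) (x : Fin n) : gen q x ≤ 1 := by
  obtain ⟨h1, h2, h3, h4⟩ := hq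
  rw [gen_apply]
  split_ifs <;> simp_all [Fin.ext_iff] <;> omega

lemma gen_ne_zero_cases {q : Q4 n} {x : Fin n} (h : gen q x ≠ 0) :
    x = q.1 ∨ x = q.2.1 ∨ x = q.2.2.1 ∨ x = q.2.2.2 := by
  rw [gen_apply] at h
  split_ifs at h <;> simp_all [eq_comm]

lemma gen_apply_one₁ {q : Q4 n} (hq : InJ d₁ d₂ d₃ q) : gen q q.1 = 1 := by
  obtain ⟨h1, h2, h3, h4⟩ := hq
  rw [gen_apply]
  split_ifs <;> simp_all [Fin.ext_iff] <;> omega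

lemma gen_apply_one₂ {q : Q4 n} (hq : InJ d₁ d₂ d₃ q) : gen q q.2.1 = 1 := by
  obtain ⟨h1, h2, h3, h4⟩ := hq
  rw [gen_apply]
  split_ifs <;> simp_all [Fin.ext_iff] <;> omega

lemma gen_apply_one₃ {q : Q4 n} (hq : InJ d₁ d₂ d₃ q) : gen q q.2.2.1 = 1 := by
  obtain ⟨h1, h2, h3, h4⟩ := hq
  rw [gen_apply]
  split_ifs <;> simp_all [Fin.ext_iff] <;> omega

lemma gen_apply_one₄ {q : Q4 n} (hq : InJ d₁ d₂ d₃ q) : gen q q.2.2.2 = 1 := by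
  obtain ⟨h1, h2, h3, h4⟩ := hq
  rw [gen_apply]
  split_ifs <;> simp_all [Fin.ext_iff] <;> omega

lemma gen_inj {q q' : Q4 n} (hq : InJ d₁ d₂ d₃ q) (hq' : InJ d₁ d₂ d₃ q')
    (h : gen q = gen q') : q = q' := by
  have key : ∀ r r' : Q4 n, InJ d₁ d₂ d₃ r → InJ d₁ d₂ d₃ r' → gen r = gen r' →
      r.1 = r'.1 ∧ r.2.1 = r'.2.1 ∧ r.2.2.1 = r'.2.2.1 ∧ r.2.2.2 = r'.2.2.2 := by
    intro r r' hr hr' hg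
    have v1 : gen r r'.1 ≠ 0 := by rw [hg, gen_apply_one₁ hr']; omega
    have v2 : gen r r'.2.1 ≠ 0 := by rw [hg, gen_apply_one₂ hr']; omega
    have v3 : gen r r'.2.2.1 ≠ 0 := by rw [hg, gen_apply_one₃ hr']; omega
    have v4 : gen r r'.2.2.2 ≠ 0 := by rw [hg, gen_apply_one₄ hr']; omega
    obtain ⟨a1, a2, a3, a4⟩ := hr
    obtain ⟨b1, b2, b3, b4⟩ := hr'
    refine ⟨?_, ?_, ?_, ?_⟩ <;>
      [rcases gen_ne_zero_cases v1 with h|h|h|h;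
       rcases gen_ne_zero_cases v2 with h|h|h|h;
       rcases gen_ne_zero_cases v3 with h|h|h|h;
       rcases gen_ne_zero_cases v4 with h|h|h|h] <;>
      simp_all [Fin.ext_iff] <;> omega
  obtain ⟨e1, e2, e3, e4⟩ := key q q' hq hq' h
  exact Prod.ext e1 (Prod.ext e2 (Prod.ext e3 e4))

lemma not_mem_supp4_of_canon {q : Q4 n} (hq : InJ d₁ d₂ d₃ q) {j : Fin n}
    (hc : cofn d₁ d₂ d₃ q j < j) : j ∉ supp4 q := by
  obtain ⟨h1, h2, h3, h4⟩ := hq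
  rw [mem_supp4_iff]
  unfold cofn at hc
  split_ifs at hc <;> rw [Fin.lt_def] at hc <;>
    simp only [Fin.ext_iff] <;> omega

lemma cofn_mem_supp4 (q : Q4 n) (j : Fin n) : cofn d₁ d₂ d₃ q j ∈ supp4 q := by
  rw [mem_supp4_iff]; unfold cofn; split_ifs <;> simp

lemma cofn_not_mem_supp4_repl {q : Q4 n} (hq : InJ d₁ d₂ d₃ q) {j : Fin n}
    (hj : j ∉ supp4 q) : cofn d₁ d₂ d₃ q j ∉ supp4 (repl d₁ d₂ d₃ q j) := by
  obtain ⟨h1, h2, h3, h4⟩ := hq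
  rw [mem_supp4_iff] at hj ⊢
  unfold cofn repl
  push_neg at hj
  obtain ⟨j1, j2, j3, j4⟩ := hj
  split_ifs <;> simp only [Fin.ext_iff] at * <;> omega

lemma canon_invol {q : Q4 n} (hq : InJ d₁ d₂ d₃ q) {j : Fin n}
    (hj : j ∉ supp4 q) (hnc : ¬ cofn d₁ d₂ d₃ q j < j) :
    cofn d₁ d₂ d₃ (repl d₁ d₂ d₃ q j) (cofn d₁ d₂ d₃ q j) < cofn d₁ d₂ d₃ q j := by
  rw [cofn_repl d₁ d₂ d₃ hq j]
  obtain ⟨h1, h2, h3, h4⟩ := hq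
  rw [mem_supp4_iff] at hj
  push_neg at hj
  obtain ⟨j1, j2, j3, j4⟩ := hj
  rw [Fin.lt_def] at *
  unfold cofn at *
  split_ifs at * <;> simp only [ne_eq, Fin.ext_iff] at * <;> omega

end SD4
namespace SD4

lemma card_filter_interval (n lo len : ℕ) (h : lo + len ≤ n) :
    (Finset.univ.filter fun i : Fin n => lo ≤ i.val ∧ i.val < lo + len).card = len := by
  have himg : (Finset.univ.filter fun i : Fin n => lo ≤ i.val ∧ i.val < lo + len) =
      Finset.image (fun k : Fin len => (⟨lo + k.val, by omega⟩ : Fin n)) Finset.univ := by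
    ext i
    simp only [Finset.mem_filter, Finset.mem_univ, true_and, Finset.mem_image]
    constructor
    · rintro ⟨h1, h2⟩
      exact ⟨⟨i.val - lo, by omega⟩, by simp only [Fin.ext_iff]; omega⟩
    · rintro ⟨k, rfl⟩
      simp only [Fin.ext_iff]
      omega
  rw [himg, Finset.card_image_of_injective _ (fun a b hab => by
    simpa [Fin.ext_iff] using hab), Finset.card_univ, Fintype.card_fin]

lemma supp4_card_of_InJ {n d₁ d₂ d₃ : ℕ} {q : Q4 n} (hq : InJ d₁ d₂ d₃ q) :
    (supp4 q).card = 4 := by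
  obtain ⟨h1, h2, h3, h4⟩ := hq
  rw [supp4]
  rw [Finset.card_insert_of_notMem (by simp [Fin.ext_iff]; omega),
    Finset.card_insert_of_notMem (by simp [Fin.ext_iff]; omega),
    Finset.card_insert_of_notMem (by simp [Fin.ext_iff]; omega),
    Finset.card_singleton]

end SD4
namespace SD4

lemma add_choose_two (a b : ℕ) :
    (a + b).choose 2 = a.choose 2 + a * b + b.choose 2 := by
  rw [Nat.add_choose_eq, Finset.Nat.sum_antidiagonal_eq_sum_range_succ_mk]
  simp [Finset.sum_range_succ]
  ring

lemma add_choose_three (a b : ℕ) :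
    (a + b).choose 3 = a.choose 3 + a.choose 2 * b + a * b.choose 2 + b.choose 3 := by
  rw [Nat.add_choose_eq, Finset.Nat.sum_antidiagonal_eq_sum_range_succ_mk]
  simp [Finset.sum_range_succ]
  ring

lemma add_choose_four (a b : ℕ) :
    (a + b).choose 4 = a.choose 4 + a.choose 3 * b + a.choose 2 * b.choose 2 +
      a * b.choose 3 + b.choose 4 := by
  rw [Nat.add_choose_eq, Finset.Nat.sum_antidiagonal_eq_sum_range_succ_mk]
  simp [Finset.sum_range_succ]
  ring

lemma choose_four_identity (d₁ d₂ d₃ : ℕ) :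
    (d₁ + d₂ + d₃).choose 4 =
      d₁.choose 4 + d₂.choose 4 + d₃.choose 4 +
      (d₁.choose 3 * (d₂ + d₃) + d₂.choose 3 * (d₁ + d₃) + d₃.choose 3 * (d₁ + d₂)) +
      (d₁.choose 2 * d₂.choose 2 + d₁.choose 2 * d₃.choose 2 + d₂.choose 2 * d₃.choose 2) +
      (d₁.choose 2 * (d₂ * d₃) + d₂.choose 2 * (d₁ * d₃) + d₃.choose 2 * (d₁ * d₂)) := by
  rw [add_assoc, add_choose_four, add_choose_four, add_choose_three, add_choose_two]
  ring

end SD4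
namespace SD4

theorem core {K : Type*} [Field K] {n : ℕ} {d₁ d₂ d₃ d₄ : ℕ}
    (hp1 : 0 < d₁) (hp2 : 0 < d₂) (hp3 : 0 < d₃) (hp4 : 0 < d₄)
    (hn : d₁ + d₂ + d₃ + d₄ = n)
    {ι : Type} [Fintype ι] [Nonempty ι]
    (u : ι → (Fin n →₀ ℕ)) (Z : ι → Finset (Fin n))
    (I : Ideal (MvPolynomial (Fin n) K))
    (hmemI : ∀ w : Fin n →₀ ℕ, ((monomial w (1:K)) ∈ I ↔
      (∃ j : Fin n, j.val < d₁ ∧ w j ≠ 0) ∧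
      (∃ j : Fin n, d₁ ≤ j.val ∧ j.val < d₁ + d₂ ∧ w j ≠ 0) ∧
      (∃ j : Fin n, d₁ + d₂ ≤ j.val ∧ j.val < d₁ + d₂ + d₃ ∧ w j ≠ 0) ∧
      (∃ j : Fin n, d₁ + d₂ + d₃ ≤ j.val ∧ w j ≠ 0)))
    (hind : iSupIndep fun i => stanleySpace K (u i) ((Z i : Set (Fin n))))
    (hsup : (⨆ i, stanleySpace K (u i) ((Z i : Set (Fin n)))) = Submodule.restrictScalars K I)
    (d : ℕ) (hd : ∀ i, d ≤ (Z i).card) : 2 * d ≤ n + 4 := by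
  classical
  -- the space of a stanley piece is inside I
  have hspace_le : ∀ i, stanleySpace K (u i) ((Z i : Set (Fin n))) ≤
      Submodule.restrictScalars K I := fun i =>
    hsup ▸ le_iSup (fun i => stanleySpace K (u i) ((Z i : Set (Fin n)))) i
  -- Step 1: each generator `gen q` is the `u` of some Stanley space
  have key : ∀ q : Q4 n, InJ d₁ d₂ d₃ q → ∃ i : ι, u i = gen q := by
    intro q hq
    have hgenI : (monomial (gen q) (1:K)) ∈ I := by
      rw [hmemI]
      obtain ⟨h1, h2, h3, h4⟩ := hq
      refine ⟨⟨q.1, h1, ?_⟩, ⟨q.2.1, h2.1, h2.2, ?_⟩, ⟨q.2.2.1, h3.1, h3.2, ?_⟩,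
        ⟨q.2.2.2, h4, ?_⟩⟩ <;>
        simp [gen_apply_one₁ ⟨h1,h2,h3,h4⟩, gen_apply_one₂ ⟨h1,h2,h3,h4⟩,
          gen_apply_one₃ ⟨h1,h2,h3,h4⟩, gen_apply_one₄ ⟨h1,h2,h3,h4⟩]
    have hgensup : (monomial (gen q) (1:K)) ∈
        ⨆ i, stanleySpace K (u i) ((Z i : Set (Fin n))) := by
      rw [hsup]; exact hgenI
    obtain ⟨i, hi⟩ := monomial_mem_iSup_stanleySpace hgensup
    obtain ⟨v, hv, hgv⟩ := monomial_mem_stanleySpace_iff.mp hi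
    refine ⟨i, ?_⟩
    -- u i ≤ gen q
    have hle : ∀ x, u i x ≤ gen q x := by
      intro x
      rw [hgv, Finsupp.add_apply]
      exact Nat.le_add_right _ _
    -- u i itself is a monomial of I
    have huI : (monomial (u i) (1:K)) ∈ I := by
      have : (monomial (u i) (1:K)) ∈ stanleySpace K (u i) ((Z i : Set (Fin n))) :=
        monomial_mem_stanleySpace_iff.mpr ⟨0, by simp, by simp⟩
      exact hspace_le i this
    rw [hmemI] at huI
    obtain ⟨⟨j1, hj1, hu1⟩, ⟨j2, hj2a, hj2b, hu2⟩, ⟨j3, hj3a, hj3b, hu3⟩, ⟨j4, hj4, hu4⟩⟩ := huI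
    obtain ⟨h1, h2, h3, h4⟩ := hq
    -- identify the four support elements
    have e1 : j1 = q.1 := by
      have : gen q j1 ≠ 0 := fun h0 => hu1 (Nat.le_zero.mp (h0 ▸ hle j1))
      rcases gen_ne_zero_cases this with h|h|h|h <;> simp only [Fin.ext_iff] at h ⊢ <;> omega
    have e2 : j2 = q.2.1 := by
      have : gen q j2 ≠ 0 := fun h0 => hu2 (Nat.le_zero.mp (h0 ▸ hle j2))
      rcases gen_ne_zero_cases this with h|h|h|h <;> simp only [Fin.ext_iff] at h ⊢ <;> omega
    have e3 : j3 = q.2.2.1 := by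
      have : gen q j3 ≠ 0 := fun h0 => hu3 (Nat.le_zero.mp (h0 ▸ hle j3))
      rcases gen_ne_zero_cases this with h|h|h|h <;> simp only [Fin.ext_iff] at h ⊢ <;> omega
    have e4 : j4 = q.2.2.2 := by
      have : gen q j4 ≠ 0 := fun h0 => hu4 (Nat.le_zero.mp (h0 ▸ hle j4))
      rcases gen_ne_zero_cases this with h|h|h|h <;> simp only [Fin.ext_iff] at h ⊢ <;> omega
    ext x
    by_cases hx : gen q x = 0
    · have := hle x; omega
    · rcases gen_ne_zero_cases hx with h|h|h|h <;> subst h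
      · rw [gen_apply_one₁ ⟨h1,h2,h3,h4⟩]
        have := hle q.1; rw [gen_apply_one₁ ⟨h1,h2,h3,h4⟩] at this
        have := e1 ▸ hu1; omega
      · rw [gen_apply_one₂ ⟨h1,h2,h3,h4⟩]
        have := hle q.2.1; rw [gen_apply_one₂ ⟨h1,h2,h3,h4⟩] at this
        have := e2 ▸ hu2; omega
      · rw [gen_apply_one₃ ⟨h1,h2,h3,h4⟩]
        have := hle q.2.2.1; rw [gen_apply_one₃ ⟨h1,h2,h3,h4⟩] at this
        have := e3 ▸ hu3; omega
      · rw [gen_apply_one₄ ⟨h1,h2,h3,h4⟩]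
        have := hle q.2.2.2; rw [gen_apply_one₄ ⟨h1,h2,h3,h4⟩] at this
        have := e4 ▸ hu4; omega
  -- Step 2: choose an index for each generator
  have key' : ∀ q : Q4 n, ∃ i : ι, InJ d₁ d₂ d₃ q → u i = gen q := by
    intro q
    by_cases hq : InJ d₁ d₂ d₃ q
    · obtain ⟨i, hi⟩ := key q hq
      exact ⟨i, fun _ => hi⟩
    · exact ⟨Classical.arbitrary ι, fun h => absurd h hq⟩
  choose iq hiq using key'
  -- the finset of generators
  set Jfin : Finset (Q4 n) := Finset.univ.filter (InJ d₁ d₂ d₃) with hJfin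
  have hInJ_of_mem : ∀ q ∈ Jfin, InJ d₁ d₂ d₃ q := by
    intro q hq; exact (Finset.mem_filter.mp hq).2
  -- Step 3: monomial multiples in stanley spaces
  have memspace : ∀ q ∈ Jfin, ∀ j ∈ Z (iq q),
      (monomial (gen q + Finsupp.single j 1) (1:K)) ∈
        stanleySpace K (u (iq q)) ((Z (iq q) : Set (Fin n))) := by
    intro q hq j hj
    rw [monomial_mem_stanleySpace_iff]
    refine ⟨Finsupp.single j 1, ?_, by rw [hiq q (hInJ_of_mem q hq)]⟩
    rw [Finsupp.support_single_ne_zero _ one_ne_zero]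
    simpa using hj
  -- Step 4: determinacy
  have wdet : ∀ q ∈ Jfin, ∀ q' ∈ Jfin, ∀ j ∈ Z (iq q), ∀ j' ∈ Z (iq q'),
      gen q + Finsupp.single j 1 = gen q' + Finsupp.single j' 1 → q = q' ∧ j = j' := by
    intro q hq q' hq' j hj j' hj' hw
    have m1 := memspace q hq j hj
    have m2 := memspace q' hq' j' hj'
    rw [← hw] at m2
    by_cases hii : iq q = iq q'
    · have hg : gen q = gen q' := by
        rw [← hiq q (hInJ_of_mem q hq), ← hiq q' (hInJ_of_mem q' hq'), hii]
      have hqq : q = q' := gen_inj (hInJ_of_mem q hq) (hInJ_of_mem q' hq') hg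
      subst hqq
      have : Finsupp.single j (1:ℕ) = Finsupp.single j' 1 := by
        have := hw
        rwa [add_right_inj] at this
      exact ⟨rfl, Finsupp.single_left_injective one_ne_zero this⟩
    · exact absurd (monomial_not_mem_two hind hii m1 m2) (fun h => h)
  -- Step 5: counting finsets
  set D : Finset (Σ _ : Q4 n, Fin n) := Jfin.sigma (fun q => Z (iq q)) with hD
  set D₁ : Finset (Σ _ : Q4 n, Fin n) := D.filter (fun p => p.2 ∈ supp4 p.1) with hD1
  set D₂ : Finset (Σ _ : Q4 n, Fin n) := D.filter (fun p => p.2 ∉ supp4 p.1) with hD2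
  set R : Finset (Σ _ : Q4 n, Fin n) :=
    Jfin.sigma (fun q => Finset.univ.filter (fun j => cofn d₁ d₂ d₃ q j < j)) with hR
  set SF : Finset (Σ _ : Q4 n, Fin n) :=
    Jfin.sigma (fun q => Finset.univ \ supp4 q) with hSF
  -- lower bound for D
  have c1 : Jfin.card * d ≤ D.card := by
    rw [hD, Finset.card_sigma]
    calc Jfin.card * d = ∑ _q ∈ Jfin, d := by rw [Finset.sum_const, smul_eq_mul, mul_comm]
    _ ≤ ∑ q ∈ Jfin, (Z (iq q)).card := Finset.sum_le_sum (fun q _ => hd (iq q))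
  have c2 : D₁.card + D₂.card = D.card := Finset.card_filter_add_card_filter_not _
  -- upper bound for D₁
  have c3 : D₁.card ≤ Jfin.card * 4 := by
    have hsub : D₁ ⊆ Jfin.sigma (fun q => supp4 q) := by
      intro p hp
      rw [hD1, Finset.mem_filter, hD, Finset.mem_sigma] at hp
      exact Finset.mem_sigma.mpr ⟨hp.1.1, hp.2⟩
    calc D₁.card ≤ (Jfin.sigma (fun q => supp4 q)).card := Finset.card_le_card hsub
    _ = ∑ q ∈ Jfin, (supp4 q).card := Finset.card_sigma _ _
    _ = ∑ _q ∈ Jfin, 4 := Finset.sum_congr rfl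
        (fun q hq => supp4_card_of_InJ (hInJ_of_mem q hq))
    _ = Jfin.card * 4 := by rw [Finset.sum_const, smul_eq_mul]
  -- D₂ injects into R
  have c4 : D₂.card ≤ R.card := by
    apply Finset.card_le_card_of_injOn
      (fun p => if cofn d₁ d₂ d₃ p.1 p.2 < p.2 then p
        else ⟨repl d₁ d₂ d₃ p.1 p.2, cofn d₁ d₂ d₃ p.1 p.2⟩)
    · -- maps to R
      intro p hp
      simp only [Finset.mem_coe, hD2, Finset.mem_filter, hD, Finset.mem_sigma] at hp
      obtain ⟨⟨hq, hz⟩, hns⟩ := hp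
      have hInJ := hInJ_of_mem _ hq
      simp only [Finset.mem_coe]
      by_cases hc : cofn d₁ d₂ d₃ p.1 p.2 < p.2
      · rw [if_pos hc, hR]
        exact Finset.mem_sigma.mpr ⟨hq, by simp [hc]⟩
      · rw [if_neg hc, hR]
        refine Finset.mem_sigma.mpr ⟨?_, ?_⟩
        · rw [hJfin, Finset.mem_filter]
          exact ⟨Finset.mem_univ _, InJ_repl d₁ d₂ d₃ hInJ p.2⟩
        · simp only [Finset.mem_filter, Finset.mem_univ, true_and]
          exact canon_invol hInJ hns hc
    · -- injective
      intro p hp p' hp' heq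
      rw [Finset.mem_coe, Finset.mem_filter, hD, Finset.mem_sigma] at hp hp'
      obtain ⟨⟨hq, hz⟩, hns⟩ := hp
      obtain ⟨⟨hq', hz'⟩, hns'⟩ := hp'
      -- the "w" of the canonical form equals the w of the original
      have hwinv : ∀ r : Σ _ : Q4 n, Fin n,
          gen ((if cofn d₁ d₂ d₃ r.1 r.2 < r.2 then r
            else ⟨repl d₁ d₂ d₃ r.1 r.2, cofn d₁ d₂ d₃ r.1 r.2⟩) : Σ _ : Q4 n, Fin n).1 +
          Finsupp.single ((if cofn d₁ d₂ d₃ r.1 r.2 < r.2 then r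
            else ⟨repl d₁ d₂ d₃ r.1 r.2, cofn d₁ d₂ d₃ r.1 r.2⟩) : Σ _ : Q4 n, Fin n).2 1 =
          gen r.1 + Finsupp.single r.2 1 := by
        intro r
        by_cases hc : cofn d₁ d₂ d₃ r.1 r.2 < r.2
        · rw [if_pos hc]
        · rw [if_neg hc]
          exact gen_invariance d₁ d₂ d₃ r.1 r.2
      have hww : gen p.1 + Finsupp.single p.2 1 = gen p'.1 + Finsupp.single p'.2 1 := by
        rw [← hwinv p, ← hwinv p']
        exact congrArg (fun r : (_ : Q4 n) × Fin n => gen r.1 + Finsupp.single r.2 (1:ℕ)) heq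
      obtain ⟨h1, h2⟩ := wdet p.1 hq p'.1 hq' p.2 hz p'.2 hz' hww
      exact Sigma.ext h1 (heq_of_eq h2)
  -- R and SF \ R are equinumerous via the involution
  have hRsub : R ⊆ SF := by
    intro p hp
    rw [hR, Finset.mem_sigma] at hp
    obtain ⟨hq, hc⟩ := hp
    simp only [Finset.mem_filter, Finset.mem_univ, true_and] at hc
    rw [hSF, Finset.mem_sigma]
    refine ⟨hq, ?_⟩
    rw [Finset.mem_sdiff]
    exact ⟨Finset.mem_univ _, not_mem_supp4_of_canon (hInJ_of_mem _ hq) hc⟩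
  have c5 : (SF \ R).card = R.card := by
    apply Finset.card_bij' (fun p _ => (⟨repl d₁ d₂ d₃ p.1 p.2, cofn d₁ d₂ d₃ p.1 p.2⟩ :
        Σ _ : Q4 n, Fin n))
      (fun p _ => (⟨repl d₁ d₂ d₃ p.1 p.2, cofn d₁ d₂ d₃ p.1 p.2⟩ : Σ _ : Q4 n, Fin n))
    · -- maps SF \ R → R
      intro p hp
      rw [Finset.mem_sdiff] at hp
      obtain ⟨hsf, hnr⟩ := hp
      rw [hSF, Finset.mem_sigma] at hsf
      obtain ⟨hq, hns⟩ := hsf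
      rw [Finset.mem_sdiff] at hns
      have hInJ := hInJ_of_mem _ hq
      have hnc : ¬ cofn d₁ d₂ d₃ p.1 p.2 < p.2 := by
        intro hc
        apply hnr
        rw [hR, Finset.mem_sigma]
        exact ⟨hq, by simp [hc]⟩
      rw [hR, Finset.mem_sigma]
      refine ⟨?_, ?_⟩
      · rw [hJfin, Finset.mem_filter]
        exact ⟨Finset.mem_univ _, InJ_repl d₁ d₂ d₃ hInJ p.2⟩
      · simp only [Finset.mem_filter, Finset.mem_univ, true_and]
        exact canon_invol hInJ hns.2 hnc
    · -- maps R → SF \ R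
      intro p hp
      rw [hR, Finset.mem_sigma] at hp
      obtain ⟨hq, hc⟩ := hp
      simp only [Finset.mem_filter, Finset.mem_univ, true_and] at hc
      have hInJ := hInJ_of_mem _ hq
      have hns : p.2 ∉ supp4 p.1 := not_mem_supp4_of_canon hInJ hc
      rw [Finset.mem_sdiff]
      constructor
      · rw [hSF, Finset.mem_sigma]
        refine ⟨?_, ?_⟩
        · rw [hJfin, Finset.mem_filter]
          exact ⟨Finset.mem_univ _, InJ_repl d₁ d₂ d₃ hInJ p.2⟩
        · rw [Finset.mem_sdiff]
          exact ⟨Finset.mem_univ _, cofn_not_mem_supp4_repl hInJ hns⟩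
      · intro hmem
        rw [hR, Finset.mem_sigma] at hmem
        obtain ⟨_, hc2⟩ := hmem
        simp only [Finset.mem_filter, Finset.mem_univ, true_and] at hc2
        rw [cofn_repl d₁ d₂ d₃ hInJ] at hc2
        exact absurd hc (asymm hc2)
    · -- left inverse
      intro p hp
      rw [Finset.mem_sdiff, hSF, Finset.mem_sigma] at hp
      have hInJ := hInJ_of_mem _ hp.1.1
      exact Sigma.ext (repl_repl d₁ d₂ d₃ hInJ p.2) (heq_of_eq (cofn_repl d₁ d₂ d₃ hInJ p.2))
    · -- right inverse
      intro p hp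
      rw [hR, Finset.mem_sigma] at hp
      have hInJ := hInJ_of_mem _ hp.1
      exact Sigma.ext (repl_repl d₁ d₂ d₃ hInJ p.2) (heq_of_eq (cofn_repl d₁ d₂ d₃ hInJ p.2))
  have c6 : SF.card = Jfin.card * (n - 4) := by
    rw [hSF, Finset.card_sigma]
    calc ∑ q ∈ Jfin, (Finset.univ \ supp4 q).card
        = ∑ _q ∈ Jfin, (n - 4) := by
          refine Finset.sum_congr rfl (fun q hq => ?_)
          rw [Finset.card_sdiff_of_subset (Finset.subset_univ _), Finset.card_univ, Fintype.card_fin,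
            supp4_card_of_InJ (hInJ_of_mem q hq)]
    _ = Jfin.card * (n - 4) := by rw [Finset.sum_const, smul_eq_mul]
  have c7 : SF.card = (SF \ R).card + R.card := (Finset.card_sdiff_add_card_eq_card hRsub).symm
  -- card of Jfin
  have c8 : Jfin.card = d₁ * d₂ * d₃ * d₄ := by
    have hprod : Jfin = (Finset.univ.filter fun i : Fin n => 0 ≤ i.val ∧ i.val < 0 + d₁) ×ˢ
        ((Finset.univ.filter fun i : Fin n => d₁ ≤ i.val ∧ i.val < d₁ + d₂) ×ˢ
        ((Finset.univ.filter fun i : Fin n => d₁ + d₂ ≤ i.val ∧ i.val < d₁ + d₂ + d₃) ×ˢ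
        (Finset.univ.filter fun i : Fin n =>
          d₁ + d₂ + d₃ ≤ i.val ∧ i.val < d₁ + d₂ + d₃ + d₄))) := by
      ext q
      rw [hJfin]
      simp only [Finset.mem_filter, Finset.mem_univ, true_and, Finset.mem_product]
      unfold InJ
      have := q.2.2.2.isLt
      constructor
      · rintro ⟨a1, a2, a3, a4⟩
        refine ⟨⟨by omega, by omega⟩, ⟨a2.1, a2.2⟩, ⟨a3.1, a3.2⟩, a4, by omega⟩
      · rintro ⟨⟨_, a1⟩, ⟨a2, a2'⟩, ⟨a3, a3'⟩, a4, _⟩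
        exact ⟨by omega, ⟨a2, a2'⟩, ⟨a3, a3'⟩, a4⟩
    rw [hprod, Finset.card_product, Finset.card_product, Finset.card_product,
      card_filter_interval n 0 d₁ (by omega), card_filter_interval n d₁ d₂ (by omega),
      card_filter_interval n (d₁ + d₂) d₃ (by omega),
      card_filter_interval n (d₁ + d₂ + d₃) d₄ (by omega)]
    ring
  -- final arithmetic
  have hm : 0 < Jfin.card := by rw [c8]; positivity
  have hn4 : 4 ≤ n := by omega
  have main : Jfin.card * (2 * d) ≤ Jfin.card * (n + 4) := by
    have e1 : Jfin.card * (2 * d) = 2 * (Jfin.card * d) := by ring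
    have e2 : 2 * (Jfin.card * d) ≤ 2 * D.card := by omega
    have e3 : 2 * D.card = 2 * D₁.card + 2 * D₂.card := by omega
    have e4 : 2 * D₁.card + 2 * D₂.card ≤ 2 * (Jfin.card * 4) + 2 * R.card := by omega
    have e5 : 2 * R.card ≤ SF.card := by omega
    have e6 : 2 * (Jfin.card * 4) + SF.card ≤ Jfin.card * (n + 4) := by
      rw [c6]
      have : Jfin.card * (n + 4) = Jfin.card * 8 + Jfin.card * (n - 4) := by
        rw [← Nat.mul_add]
        congr 1
        omega
      omega
    omega
  exact Nat.le_of_mul_le_mul_left main hm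

end SD4
/-- **Proposition 3.10.** For `I = P_1 ∩ P_2 ∩ P_3 ∩ P_4` with the `P_i` generated by
consecutive disjoint blocks of variables of sizes `d_1 ≥ d_2 ≥ d_3 ≥ d_4 = d`,
`d_1 + d_2 + d_3 + d_4 = n`, one has
`sdepth I ≤ 3 + d + (1/(d_1 d_2 d_3)) [C(n-d,4) - Σ_{i≤3} C(d_i,4)
  - Σ_{i≤3} C(d_i,3)((n-d)-d_i) - Σ_{i<j≤3} C(d_i,2) C(d_j,2)]`. -/
theorem sdepth_le_four_primes_binomial_bound {K : Type*} [Field K] {n : ℕ}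
    (d₁ d₂ d₃ d₄ : ℕ) (h12 : d₂ ≤ d₁) (h23 : d₃ ≤ d₂) (h34 : d₄ ≤ d₃)
    (hn : d₁ + d₂ + d₃ + d₄ = n)
    (P₁ P₂ P₃ P₄ I : Ideal (MvPolynomial (Fin n) K))
    (hP₁ : P₁ = Ideal.span
      ((fun j => (X j : MvPolynomial (Fin n) K)) '' {i : Fin n | (i : ℕ) < d₁}))
    (hP₂ : P₂ = Ideal.span
      ((fun j => (X j : MvPolynomial (Fin n) K)) ''
        {i : Fin n | d₁ ≤ (i : ℕ) ∧ (i : ℕ) < d₁ + d₂}))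
    (hP₃ : P₃ = Ideal.span
      ((fun j => (X j : MvPolynomial (Fin n) K)) ''
        {i : Fin n | d₁ + d₂ ≤ (i : ℕ) ∧ (i : ℕ) < d₁ + d₂ + d₃}))
    (hP₄ : P₄ = Ideal.span
      ((fun j => (X j : MvPolynomial (Fin n) K)) ''
        {i : Fin n | d₁ + d₂ + d₃ ≤ (i : ℕ)}))
    (hI : I = P₁ ⊓ P₂ ⊓ P₃ ⊓ P₄) :
    (sdepthIdeal I : ℚ) ≤ 3 + (d₄ : ℚ) + (1 / ((d₁ : ℚ) * (d₂ : ℚ) * (d₃ : ℚ))) *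
      (((n - d₄).choose 4 : ℚ)
        - ((d₁.choose 4 : ℚ) + (d₂.choose 4 : ℚ) + (d₃.choose 4 : ℚ))
        - ((d₁.choose 3 : ℚ) * (((n : ℚ) - (d₄ : ℚ)) - (d₁ : ℚ))
            + (d₂.choose 3 : ℚ) * (((n : ℚ) - (d₄ : ℚ)) - (d₂ : ℚ))
            + (d₃.choose 3 : ℚ) * (((n : ℚ) - (d₄ : ℚ)) - (d₃ : ℚ)))
        - ((d₁.choose 2 : ℚ) * (d₂.choose 2 : ℚ)
            + (d₁.choose 2 : ℚ) * (d₃.choose 2 : ℚ)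
            + (d₂.choose 2 : ℚ) * (d₃.choose 2 : ℚ))) := by
  have hm4 : n - d₄ = d₁ + d₂ + d₃ := by omega
  have hq : (n : ℚ) = (d₁ : ℚ) + (d₂ : ℚ) + (d₃ : ℚ) + (d₄ : ℚ) := by
    exact_mod_cast congrArg (Nat.cast (R := ℚ)) hn.symm
  -- rewrite the bracket using the combinatorial identity
  have hbr : (((n - d₄).choose 4 : ℚ)
        - ((d₁.choose 4 : ℚ) + (d₂.choose 4 : ℚ) + (d₃.choose 4 : ℚ))
        - ((d₁.choose 3 : ℚ) * (((n : ℚ) - (d₄ : ℚ)) - (d₁ : ℚ))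
            + (d₂.choose 3 : ℚ) * (((n : ℚ) - (d₄ : ℚ)) - (d₂ : ℚ))
            + (d₃.choose 3 : ℚ) * (((n : ℚ) - (d₄ : ℚ)) - (d₃ : ℚ)))
        - ((d₁.choose 2 : ℚ) * (d₂.choose 2 : ℚ)
            + (d₁.choose 2 : ℚ) * (d₃.choose 2 : ℚ)
            + (d₂.choose 2 : ℚ) * (d₃.choose 2 : ℚ)))
      = (d₁.choose 2 : ℚ) * (d₂ : ℚ) * (d₃ : ℚ) + (d₂.choose 2 : ℚ) * (d₁ : ℚ) * (d₃ : ℚ)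
        + (d₃.choose 2 : ℚ) * (d₁ : ℚ) * (d₂ : ℚ) := by
    rw [hm4, hq, SD4.choose_four_identity d₁ d₂ d₃]
    push_cast
    ring
  rw [hbr]
  by_cases hd4 : d₄ = 0
  · -- degenerate case : I = 0 and there are no Stanley decompositions
    subst hd4
    have hP4bot : P₄ = ⊥ := by
      rw [hP₄]
      have : {i : Fin n | d₁ + d₂ + d₃ ≤ (i : ℕ)} = ∅ := by
        ext i
        have := i.isLt
        simp only [Set.mem_setOf_eq, Set.mem_empty_iff_false, iff_false, not_le]
        omega
      rw [this, Set.image_empty, Ideal.span_empty]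
    have hIbot : I = ⊥ := by
      rw [hI, hP4bot]
      exact inf_bot_eq _
    have hempty : {d | ∃ (ι : Type) (_ : Fintype ι) (_ : Nonempty ι)
        (u : ι → (Fin n →₀ ℕ)) (Z : ι → Finset (Fin n)),
        IsStanleyDecompOfIdeal I u Z ∧ ∀ i, d ≤ (Z i).card} = ∅ := by
      ext x
      simp only [Set.mem_setOf_eq, Set.mem_empty_iff_false, iff_false]
      rintro ⟨ι, _fint, hne, u, Z, ⟨hind, hsup⟩, _⟩
      obtain ⟨i0⟩ := hne
      have h1 : (monomial (u i0) (1:K)) ∈ stanleySpace K (u i0) ((Z i0 : Set (Fin n))) :=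
        monomial_mem_stanleySpace_iff.mpr ⟨0, by simp, by simp⟩
      have h2 : (monomial (u i0) (1:K)) ∈ Submodule.restrictScalars K I := by
        rw [← hsup]
        exact (le_iSup (fun i => stanleySpace K (u i) ((Z i : Set (Fin n)))) i0) h1
      rw [hIbot] at h2
      simp only [Submodule.restrictScalars_mem, Ideal.mem_bot] at h2
      exact (one_ne_zero : (1:K) ≠ 0) (MvPolynomial.monomial_eq_zero.mp h2)
    rw [sdepthIdeal, hempty, csSup_empty]
    have hnn : (0:ℚ) ≤ 3 + (0 : ℚ) + (1 / ((d₁ : ℚ) * (d₂ : ℚ) * (d₃ : ℚ))) *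
        ((d₁.choose 2 : ℚ) * (d₂ : ℚ) * (d₃ : ℚ) + (d₂.choose 2 : ℚ) * (d₁ : ℚ) * (d₃ : ℚ)
          + (d₃.choose 2 : ℚ) * (d₁ : ℚ) * (d₂ : ℚ)) := by positivity
    simpa using hnn
  · -- main case
    have hp4 : 0 < d₄ := Nat.pos_of_ne_zero hd4
    have hp3 : 0 < d₃ := lt_of_lt_of_le hp4 h34
    have hp2 : 0 < d₂ := lt_of_lt_of_le hp3 h23
    have hp1 : 0 < d₁ := lt_of_lt_of_le hp2 h12
    -- monomial membership in I
    have hmemI : ∀ w : Fin n →₀ ℕ, ((monomial w (1:K)) ∈ I ↔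
        (∃ j : Fin n, j.val < d₁ ∧ w j ≠ 0) ∧
        (∃ j : Fin n, d₁ ≤ j.val ∧ j.val < d₁ + d₂ ∧ w j ≠ 0) ∧
        (∃ j : Fin n, d₁ + d₂ ≤ j.val ∧ j.val < d₁ + d₂ + d₃ ∧ w j ≠ 0) ∧
        (∃ j : Fin n, d₁ + d₂ + d₃ ≤ j.val ∧ w j ≠ 0)) := by
      classical
      intro w
      rw [hI, Submodule.mem_inf, Submodule.mem_inf, Submodule.mem_inf,
        hP₁, hP₂, hP₃, hP₄, mem_ideal_span_X_image, mem_ideal_span_X_image,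
        mem_ideal_span_X_image, mem_ideal_span_X_image]
      have hsupp : (monomial w (1:K)).support = {w} := by
        rw [MvPolynomial.support_monomial, if_neg (one_ne_zero : (1:K) ≠ 0)]
      rw [hsupp]
      simp only [Finset.mem_singleton, forall_eq, Set.mem_setOf_eq]
      tauto
    -- every admissible depth is at most (n+4)/2
    have hbound : ∀ x ∈ {d | ∃ (ι : Type) (_ : Fintype ι) (_ : Nonempty ι)
        (u : ι → (Fin n →₀ ℕ)) (Z : ι → Finset (Fin n)),
        IsStanleyDecompOfIdeal I u Z ∧ ∀ i, d ≤ (Z i).card}, 2 * x ≤ n + 4 := by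
      rintro x ⟨ι, _fint, hne, u, Z, ⟨hind, hsup⟩, hZ⟩
      exact SD4.core hp1 hp2 hp3 hp4 hn u Z I hmemI hind hsup x hZ
    have generic : ∀ s : Set ℕ, (∀ x ∈ s, 2 * x ≤ n + 4) → 2 * sSup s ≤ n + 4 := by
      intro s hs
      rcases Set.eq_empty_or_nonempty s with rfl | hne
      · rw [csSup_empty, Nat.bot_eq_zero]
        omega
      · have hle : sSup s ≤ (n + 4) / 2 :=
          csSup_le hne (fun x hx => by have := hs x hx; omega)
        omega
    have hsd : 2 * sdepthIdeal I ≤ n + 4 := by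
      unfold sdepthIdeal
      exact generic _ hbound
    -- conclude over ℚ
    have hsdQ : (sdepthIdeal I : ℚ) ≤ ((n : ℚ) + 4) / 2 := by
      have : ((2 * sdepthIdeal I : ℕ) : ℚ) ≤ ((n + 4 : ℕ) : ℚ) := by exact_mod_cast hsd
      push_cast at this
      linarith
    have hsplit : (1 / ((d₁ : ℚ) * (d₂ : ℚ) * (d₃ : ℚ))) *
        ((d₁.choose 2 : ℚ) * (d₂ : ℚ) * (d₃ : ℚ) + (d₂.choose 2 : ℚ) * (d₁ : ℚ) * (d₃ : ℚ)
          + (d₃.choose 2 : ℚ) * (d₁ : ℚ) * (d₂ : ℚ))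
        = ((d₁ : ℚ) - 1) / 2 + ((d₂ : ℚ) - 1) / 2 + ((d₃ : ℚ) - 1) / 2 := by
      have e1 : (d₁ : ℚ) ≠ 0 := Nat.cast_ne_zero.mpr (by omega)
      have e2 : (d₂ : ℚ) ≠ 0 := Nat.cast_ne_zero.mpr (by omega)
      have e3 : (d₃ : ℚ) ≠ 0 := Nat.cast_ne_zero.mpr (by omega)
      rw [Nat.cast_choose_two, Nat.cast_choose_two, Nat.cast_choose_two]
      field_simp
    rw [hsplit]
    have h1 : (1 : ℚ) ≤ (d₁ : ℚ) := by exact_mod_cast hp1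
    have h2 : (1 : ℚ) ≤ (d₂ : ℚ) := by exact_mod_cast hp2
    have h3 : (1 : ℚ) ≤ (d₃ : ℚ) := by exact_mod_cast hp3
    have h4 : (1 : ℚ) ≤ (d₄ : ℚ) := by exact_mod_cast hp4
    rw [hq] at hsdQ
    linarith
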